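/- Let Ψ be an ℝⁿ-valued random vector whose components are independent standard normal random variables, let a ∈ ℝⁿ with a ≠ 0, b ∈ ℝ, β > 0, and define g(ψ) = ⟨a, ψ⟩ + b. Then the reliability index constraint of the reliability index approach, P[g(Ψ) < 0] ≤ Φ(−β), holds if and only if the performance measure approach constraint holds, namely min{ g(ψ) : ‖ψ‖ = β } ≥ 0. -/

import Mathlib

open MeasureTheory ProbabilityTheory Real Set RealInnerProductSpace

open scoped NNReal

/-!
Since the components of `Ψ` are independent standard normals, `g(Ψ) = ⟪a, Ψ⟫ + b` is normal with
mean `b` and variance `‖a‖²`, so `P[g(Ψ) < 0] = Φ(-b / ‖a‖)`. As `Φ` is strictly increasing, the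
RIA constraint is `β ≤ b / ‖a‖`. By Cauchy–Schwarz the minimum of `g` on the sphere of radius `β`
is `b - ‖a‖ β`, attained at `-(β / ‖a‖) a`, so the PMA constraint is the same inequality.
-/

section Gaussian

variable {Ω : Type*} [MeasurableSpace Ω] {P : Measure Ω} [IsProbabilityMeasure P]

lemma map_finsetSum_eq_gaussianReal_of_iIndepFun {ι : Type*} {X : ι → Ω → ℝ}
    (hX : ∀ i, Measurable (X i)) (hind : iIndepFun X P) {m : ι → ℝ} {v : ι → ℝ≥0}
    (hlaw : ∀ i, P.map (X i) = gaussianReal (m i) (v i)) (s : Finset ι) :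
    P.map (∑ i ∈ s, X i) = gaussianReal (∑ i ∈ s, m i) (∑ i ∈ s, v i) := by
  classical
  induction s using Finset.induction_on with
  | empty => simp [gaussianReal_zero_var, Pi.zero_def]
  | insert i s hi ih =>
    rw [Finset.sum_insert hi, Finset.sum_insert hi, Finset.sum_insert hi, add_comm (X i),
      add_comm (m i), add_comm (v i)]
    exact gaussianReal_add_gaussianReal_of_indepFun (hind.indepFun_finsetSum_of_notMem hX hi) ih
      (hlaw i)

lemma map_inner_add_eq_gaussianReal {ι : Type*} [Fintype ι] {Ψ : Ω → EuclideanSpace ℝ ι}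
    (hΨ : Measurable Ψ) (hindep : iIndepFun (fun i ω ↦ Ψ ω i) P)
    (hgauss : ∀ i, P.map (fun ω ↦ Ψ ω i) = gaussianReal 0 1) (a : EuclideanSpace ℝ ι) (b : ℝ) :
    P.map (fun ω ↦ ⟪a, Ψ ω⟫ + b) = gaussianReal b (‖a‖₊ ^ 2) := by
  have hΨi : ∀ i, Measurable fun ω ↦ Ψ ω i := fun i ↦ by fun_prop
  have hlaw : ∀ i, P.map (fun ω ↦ a i * Ψ ω i) = gaussianReal 0 (‖a i‖₊ ^ 2) := fun i ↦ by
    rw [← Function.comp_def (a i * ·), ← Measure.map_map (measurable_const_mul _) (hΨi i),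
      hgauss i, gaussianReal_map_const_mul, mul_zero, mul_one]
    congr 1
    ext
    simp
  have hsum := map_finsetSum_eq_gaussianReal_of_iIndepFun (fun i ↦ (hΨi i).const_mul (a i))
    (hindep.comp _ fun i ↦ measurable_const_mul (a i)) hlaw Finset.univ
  have hinner : (fun ω ↦ ⟪a, Ψ ω⟫ + b) = (· + b) ∘ ∑ i, fun ω ↦ a i * Ψ ω i := by
    ext ω
    simp [PiLp.inner_apply, mul_comm]
  rw [hinner, ← Measure.map_map (measurable_add_const b) (by fun_prop), hsum,
    gaussianReal_map_add_const, Finset.sum_const_zero, zero_add, PiLp.nnnorm_eq_of_L2 a,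
    NNReal.sq_sqrt]

end Gaussian

lemma gaussianReal_Iio_strictMono (μ : ℝ) {v : ℝ≥0} (hv : v ≠ 0) :
    StrictMono fun t ↦ gaussianReal μ v (Iio t) := by
  intro s t hst
  have hpos : 0 < gaussianReal μ v (Ico s t) :=
    pos_of_ne_zero fun h ↦ by
      simpa [hst.not_ge] using gaussianReal_absolutelyContinuous' μ hv h
  show _ < gaussianReal μ v (Iio t)
  rw [← Iio_union_Ico_eq_Iio hst.le,
    measure_union (Iio_disjoint_Ici le_rfl |>.mono_right Ico_subset_Ici_self) measurableSet_Ico]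
  exact ENNReal.lt_add_right (measure_ne_top _ _) hpos.ne'

lemma gaussianReal_Iio_eq_standard (μ : ℝ) {v : ℝ≥0} (hv : v ≠ 0) (c : ℝ) :
    gaussianReal μ v (Iio c) = gaussianReal 0 1 (Iio ((c - μ) / √v)) := by
  have hσ : 0 < √(v : ℝ) := by positivity
  have hstd : (gaussianReal 0 1).map (fun x ↦ √v * x + μ) = gaussianReal μ v := by
    rw [← Function.comp_def (· + μ) (√v * ·),
      ← Measure.map_map (measurable_add_const μ) (measurable_const_mul _),
      gaussianReal_map_const_mul, gaussianReal_map_add_const]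
    congr 1
    · simp
    · ext; simp
  have hpre : (fun x ↦ √v * x + μ) ⁻¹' Iio c = Iio ((c - μ) / √v) := by
    ext x
    simp only [mem_preimage, mem_Iio, lt_div_iff₀ hσ]
    constructor <;> intro h <;> linarith
  rw [← hstd, Measure.map_apply (by fun_prop) measurableSet_Iio, hpre]

lemma gaussianReal_zero_one_Iio_eq_integral (t : ℝ) :
    gaussianReal 0 1 (Iio t)
      = ENNReal.ofReal (∫ s in Iic t, (√(2 * π))⁻¹ * rexp (-s ^ 2 / 2)) := by
  rw [gaussianReal_apply_eq_integral 0 one_ne_zero, setIntegral_congr_set Iio_ae_eq_Iic]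
  simp [gaussianPDFReal]

lemma isLeast_inner_add_image_norm_eq {E : Type*} [NormedAddCommGroup E] [InnerProductSpace ℝ E]
    {a : E} (ha : a ≠ 0) (b : ℝ) {β : ℝ} (hβ : 0 ≤ β) :
    IsLeast ((fun ψ ↦ ⟪a, ψ⟫ + b) '' {ψ | ‖ψ‖ = β}) (b - ‖a‖ * β) := by
  have hna : 0 < ‖a‖ := norm_pos_iff.mpr ha
  refine ⟨⟨-(β / ‖a‖) • a, ?_, ?_⟩, ?_⟩
  · simp [norm_smul, abs_of_nonneg hβ, hna.ne']
  · simp only [real_inner_smul_right, real_inner_self_eq_norm_sq]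
    field_simp
    ring
  · rintro _ ⟨ψ, rfl, rfl⟩
    linarith [neg_le_of_abs_le (abs_real_inner_le_norm a ψ)]

/-- Equivalence of the reliability index approach (RIA) and the performance measure
approach (PMA) for an affine Gaussian limit state: with `Ψ` having independent standard
normal components and `g ψ = ⟪a, ψ⟫ + b`, the constraint `P[g(Ψ) < 0] ≤ Φ(-β)` holds
if and only if `min {g ψ : ‖ψ‖ = β} ≥ 0`. -/
theorem stmt_3 (n : ℕ)
    (Φ : ℝ → ℝ)
    (hΦ : ∀ t : ℝ, Φ t = ∫ s in Iic t, (Real.sqrt (2 * Real.pi))⁻¹ * Real.exp (-s ^ 2 / 2))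
    {Ω : Type*} [MeasurableSpace Ω] (P : Measure Ω) [IsProbabilityMeasure P]
    (Ψ : Ω → EuclideanSpace ℝ (Fin n)) (hΨ : Measurable Ψ)
    (hindep : iIndepFun (fun i ω => Ψ ω i) P)
    (hgauss : ∀ i : Fin n, P.map (fun ω => Ψ ω i) = gaussianReal 0 1)
    (a : EuclideanSpace ℝ (Fin n)) (ha : a ≠ 0) (b β : ℝ) (hβ : 0 < β)
    (g : EuclideanSpace ℝ (Fin n) → ℝ) (hg : ∀ ψ, g ψ = ⟪a, ψ⟫ + b) :
    P {ω | g (Ψ ω) < 0} ≤ ENNReal.ofReal (Φ (-β)) ↔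
      0 ≤ sInf (g '' {ψ | ‖ψ‖ = β}) := by
  obtain rfl : g = fun ψ ↦ ⟪a, ψ⟫ + b := funext hg
  have hna : 0 < ‖a‖ := norm_pos_iff.mpr ha
  have hprob : P {ω | ⟪a, Ψ ω⟫ + b < 0} = gaussianReal 0 1 (Iio (-b / ‖a‖)) := by
    change P ((fun ω ↦ ⟪a, Ψ ω⟫ + b) ⁻¹' Iio 0) = _
    rw [← Measure.map_apply (by fun_prop) measurableSet_Iio,
      map_inner_add_eq_gaussianReal hΨ hindep hgauss,
      gaussianReal_Iio_eq_standard b (pow_ne_zero 2 (nnnorm_ne_zero_iff.mpr ha))]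
    simp
  have hΦβ : ENNReal.ofReal (Φ (-β)) = gaussianReal 0 1 (Iio (-β)) := by
    rw [hΦ, gaussianReal_zero_one_Iio_eq_integral]
  rw [hprob, hΦβ, (gaussianReal_Iio_strictMono 0 one_ne_zero).le_iff_le,
    (isLeast_inner_add_image_norm_eq ha b hβ.le).csInf_eq, neg_div, neg_le_neg_iff,
    le_div_iff₀ hna, sub_nonneg, mul_comm]
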